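/- Define b(n) = Σ_{k=1}^{n-1} C(n,k) · Σ_{i=1}^{n-1-k} C(n-k,i) · (1/2)^(k·i) · Σ_{m=1}^{k} C(k,m) · (1/2)^(m·(n-k-i)). Then for all n ≥ 0, b(n) ≤ 4 · (7/4)^n. -/
import Mathlib

open Finset

/-- The triple sum
`b(n) = Σ_{k=1}^{n-1} C(n,k) Σ_{i=1}^{n-1-k} C(n-k,i) (1/2)^{ki} Σ_{m=1}^{k} C(k,m) (1/2)^{m(n-k-i)}`. -/
noncomputable def b (n : ℕ) : ℝ :=
  ∑ k ∈ Finset.Icc 1 (n - 1), (n.choose k : ℝ) *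
    ∑ i ∈ Finset.Icc 1 (n - 1 - k), ((n - k).choose i : ℝ) * (1 / 2) ^ (k * i) *
      ∑ m ∈ Finset.Icc 1 k, (k.choose m : ℝ) * (1 / 2) ^ (m * (n - k - i))

lemma sum_choose_half (k : ℕ) :
    ∑ m ∈ Icc 1 k, (k.choose m : ℝ) * (1 / 2) ^ m ≤ (3 / 2) ^ k := by
  have hsub : Icc 1 k ⊆ range (k + 1) := by
    intro x hx; simp only [mem_Icc] at hx; simp only [mem_range]; omega
  have h1 : ∑ m ∈ Icc 1 k, (k.choose m : ℝ) * (1 / 2) ^ m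
      ≤ ∑ m ∈ range (k + 1), (k.choose m : ℝ) * (1 / 2) ^ m := by
    apply sum_le_sum_of_subset_of_nonneg hsub
    intro m _ _; positivity
  have h2 : ((1 : ℝ) / 2 + 1) ^ k = ∑ m ∈ range (k + 1), (k.choose m : ℝ) * (1 / 2) ^ m := by
    rw [add_pow]
    apply sum_congr rfl
    intro m _; ring
  have h3 : ((1 : ℝ) / 2 + 1) ^ k = (3 / 2 : ℝ) ^ k := by norm_num
  linarith [h1]

lemma sum_choose_le (N M : ℕ) (h : M ≤ N) : ∑ i ∈ Icc 1 M, (N.choose i : ℝ) ≤ 2 ^ N := by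
  have hsub : Icc 1 M ⊆ range (N + 1) := by
    intro x hx; simp only [mem_Icc] at hx; simp only [mem_range]; omega
  have h1 : ∑ i ∈ Icc 1 M, (N.choose i : ℝ)
      ≤ ∑ i ∈ range (N + 1), (N.choose i : ℝ) := by
    apply sum_le_sum_of_subset_of_nonneg hsub
    intro m _ _; positivity
  have h2 : ∑ i ∈ range (N + 1), (N.choose i : ℝ) = 2 ^ N := by
    have h := Nat.sum_range_choose N
    exact_mod_cast h
  linarith

lemma key_exp {n k i m : ℕ} (hk : k ∈ Icc 1 (n - 1)) (hi : i ∈ Icc 1 (n - 1 - k))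
    (hm : m ∈ Icc 1 k) :
    ((1 : ℝ) / 2) ^ (k * i) * ((1 : ℝ) / 2) ^ (m * (n - k - i))
      ≤ 4 * (1 / 2) ^ n * (1 / 2) ^ m := by
  simp only [mem_Icc] at hk hi hm
  set j := n - k - i with hj
  have hsum : k + i + j = n := by omega
  have hj1 : 1 ≤ j := by omega
  have h1 : k + i ≤ k * i + 1 := by nlinarith [hk.1, hi.1]
  have h2 : m + j ≤ m * j + 1 := by nlinarith [hm.1, hj1]
  have hexp : n + m ≤ k * i + m * j + 2 := by omega
  have hle : ((1 : ℝ) / 2) ^ (k * i + m * j) ≤ ((1 : ℝ) / 2) ^ (n + m - 2) :=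
    pow_le_pow_of_le_one (by norm_num) (by norm_num) (by omega)
  have heq : 4 * ((1 : ℝ) / 2) ^ n * (1 / 2) ^ m = ((1 : ℝ) / 2) ^ (n + m - 2) := by
    obtain ⟨p, hp⟩ : ∃ p, n + m = p + 2 := ⟨n + m - 2, by omega⟩
    have hp2 : n + m - 2 = p := by omega
    rw [mul_assoc, ← pow_add, hp, Nat.add_sub_cancel, pow_add]
    ring
  rw [← pow_add, heq]
  exact hle

theorem b_upper_bound (n : ℕ) : b n ≤ 4 * (7 / 4) ^ n := by
  have step1 : b n ≤ ∑ k ∈ Icc 1 (n - 1),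
      (n.choose k : ℝ) * (4 * (1 / 2) ^ n * (3 / 2) ^ k * 2 ^ (n - k)) := by
    unfold b
    apply sum_le_sum
    intro k hk
    apply mul_le_mul_of_nonneg_left _ (by positivity)
    calc ∑ i ∈ Icc 1 (n - 1 - k), ((n - k).choose i : ℝ) * (1 / 2) ^ (k * i) *
          ∑ m ∈ Icc 1 k, (k.choose m : ℝ) * (1 / 2) ^ (m * (n - k - i))
        ≤ ∑ i ∈ Icc 1 (n - 1 - k), ((n - k).choose i : ℝ) * (4 * (1 / 2) ^ n * (3 / 2) ^ k) := by
          apply sum_le_sum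
          intro i hi
          rw [mul_assoc]
          apply mul_le_mul_of_nonneg_left _ (by positivity)
          rw [mul_sum]
          calc ∑ m ∈ Icc 1 k, (1 / 2 : ℝ) ^ (k * i) *
                ((k.choose m : ℝ) * (1 / 2) ^ (m * (n - k - i)))
              ≤ ∑ m ∈ Icc 1 k, (k.choose m : ℝ) * (4 * (1 / 2) ^ n * (1 / 2) ^ m) := by
                apply sum_le_sum
                intro m hm
                have hkey := key_exp hk hi hm
                calc (1 / 2 : ℝ) ^ (k * i) * ((k.choose m : ℝ) * (1 / 2) ^ (m * (n - k - i)))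
                    = (k.choose m : ℝ) * ((1 / 2) ^ (k * i) * (1 / 2) ^ (m * (n - k - i))) := by
                      ring
                  _ ≤ (k.choose m : ℝ) * (4 * (1 / 2) ^ n * (1 / 2) ^ m) :=
                      mul_le_mul_of_nonneg_left hkey (by positivity)
            _ = 4 * (1 / 2) ^ n * ∑ m ∈ Icc 1 k, (k.choose m : ℝ) * (1 / 2) ^ m := by
                rw [mul_sum]
                apply sum_congr rfl
                intro m _; ring
            _ ≤ 4 * (1 / 2) ^ n * (3 / 2) ^ k :=
                mul_le_mul_of_nonneg_left (sum_choose_half k) (by positivity)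
      _ = (∑ i ∈ Icc 1 (n - 1 - k), ((n - k).choose i : ℝ)) * (4 * (1 / 2) ^ n * (3 / 2) ^ k) := by
          rw [sum_mul]
      _ ≤ 2 ^ (n - k) * (4 * (1 / 2) ^ n * (3 / 2) ^ k) := by
          apply mul_le_mul_of_nonneg_right (sum_choose_le _ _ (by omega)) (by positivity)
      _ = 4 * (1 / 2) ^ n * (3 / 2) ^ k * 2 ^ (n - k) := by ring
  have step2 : ∑ k ∈ Icc 1 (n - 1),
      (n.choose k : ℝ) * (4 * (1 / 2) ^ n * (3 / 2) ^ k * 2 ^ (n - k))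
      ≤ 4 * (1 / 2) ^ n * (7 / 2) ^ n := by
    have hsub : Icc 1 (n - 1) ⊆ range (n + 1) := by
      intro x hx; simp only [mem_Icc] at hx; simp only [mem_range]; omega
    have h1 : ∑ k ∈ Icc 1 (n - 1),
        (n.choose k : ℝ) * (4 * (1 / 2) ^ n * (3 / 2) ^ k * 2 ^ (n - k))
        ≤ ∑ k ∈ range (n + 1),
        (n.choose k : ℝ) * (4 * (1 / 2) ^ n * (3 / 2) ^ k * 2 ^ (n - k)) := by
      apply sum_le_sum_of_subset_of_nonneg hsub
      intro m _ _; positivity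
    have h2 : ((3 : ℝ) / 2 + 2) ^ n = ∑ k ∈ range (n + 1),
        (n.choose k : ℝ) * ((3 / 2) ^ k * 2 ^ (n - k)) := by
      rw [add_pow]
      apply sum_congr rfl
      intro m _; ring
    have h3 : ∑ k ∈ range (n + 1),
        (n.choose k : ℝ) * (4 * (1 / 2) ^ n * (3 / 2) ^ k * 2 ^ (n - k))
        = 4 * (1 / 2) ^ n * ∑ k ∈ range (n + 1),
          (n.choose k : ℝ) * ((3 / 2) ^ k * 2 ^ (n - k)) := by
      rw [mul_sum]
      apply sum_congr rfl
      intro m _; ring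
    have h4 : ((3 : ℝ) / 2 + 2) ^ n = (7 / 2 : ℝ) ^ n := by norm_num
    calc ∑ k ∈ Icc 1 (n - 1),
        (n.choose k : ℝ) * (4 * (1 / 2) ^ n * (3 / 2) ^ k * 2 ^ (n - k))
        ≤ ∑ k ∈ range (n + 1),
          (n.choose k : ℝ) * (4 * (1 / 2) ^ n * (3 / 2) ^ k * 2 ^ (n - k)) := h1
      _ = 4 * (1 / 2) ^ n * ((7 / 2 : ℝ) ^ n) := by rw [h3, ← h2, h4]
  have hfin : 4 * ((1 : ℝ) / 2) ^ n * (7 / 2) ^ n = 4 * (7 / 4) ^ n := by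
    rw [mul_assoc, ← mul_pow]
    norm_num
  linarith
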